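/- Let 1 ≤ i < j ≤ n and set w = (e_{G^n}, (i j)) ∈ G≀S(n), where (i j) is the transposition of i and j and e_{G^n} = (e_G,…,e_G). Then for every l ∈ {1,…,k}, every x_n ∈ G≀S(n), and every x_{n+1} ∈ G≀S(n+1) with p_{n,n+1}(x_{n+1}) = x_n: [w·x_n]_{c_l} − [x_n]_{c_l} = [ι(w)·x_{n+1}]_{c_l} − [x_{n+1}]_{c_l}, where ι is the embedding of G≀S(n) into G≀S(n+1). -/

import Mathlib

namespace WreathPaper

/-- The permutation action of `S(n)` on `G^n`. -/
def permAut (G : Type*) [Group G] (n : ℕ) : Equiv.Perm (Fin n) →* MulAut (Fin n → G) where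
  toFun s :=
    { toFun := fun g => g ∘ s.symm
      invFun := fun g => g ∘ s
      left_inv := fun g => funext fun i => by simp
      right_inv := fun g => funext fun i => by simp
      map_mul' := fun g h => rfl }
  map_one' := by ext g i; rfl
  map_mul' := fun s t => by ext g i; rfl

/-- The wreath product `G ≀ S(n)`: underlying set `G^n × S(n)` with
`((g₁,…,gₙ),s)·((h₁,…,hₙ),t) = ((g₁h_{s⁻¹(1)},…,g_nh_{s⁻¹(n)}), st)`. -/
abbrev WP (G : Type*) [Group G] (n : ℕ) :=
  SemidirectProduct (Fin n → G) (Equiv.Perm (Fin n)) (permAut G n)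

namespace WP

variable {G : Type*} [Group G] {n : ℕ}

def wpEquivProd (G : Type*) [Group G] (n : ℕ) :
    WP G n ≃ (Fin n → G) × Equiv.Perm (Fin n) where
  toFun x := (x.left, x.right)
  invFun p := ⟨p.1, p.2⟩
  left_inv x := rfl
  right_inv p := rfl

instance [Fintype G] : Fintype (WP G n) := Fintype.ofEquiv _ (wpEquivProd G n).symm
instance [DecidableEq G] : DecidableEq (WP G n) := (wpEquivProd G n).decidableEq

/-- The cycle-product of `x = ((g₁,…,gₙ),s)` corresponding to the cycle of `s`
containing `i` (computed starting at `i`): `g_{s^{r-1}(i)} ⋯ g_{s(i)} g_i`. -/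
noncomputable def cycleProd (x : WP G n) (i : Fin n) : G :=
  (((List.range (Function.minimalPeriod (⇑x.right) i)).reverse).map
    fun j => x.left ((x.right ^ j) i)).prod

/-- `[x]_c`: the number of cycles of `x` whose cycle-product lies in `c`
(cycles are counted via their minimal representative). -/
noncomputable def cycleCount (x : WP G n) (c : Set G) : ℕ :=
  Nat.card {i : Fin n // (∀ m : ℕ, i ≤ (x.right ^ m) i) ∧ cycleProd x i ∈ c}

/-- The number of cycles of `x` of length `j` whose cycle-product lies in `c`. -/
noncomputable def cycleCountLen (x : WP G n) (c : Set G) (j : ℕ) : ℕ :=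
  Nat.card {i : Fin n // (∀ m : ℕ, i ≤ (x.right ^ m) i) ∧
    Function.minimalPeriod (⇑x.right) i = j ∧ cycleProd x i ∈ c}

/-- Removing the point `n+1` from a permutation of `{1,…,n+1}`. -/
def projPerm (s : Equiv.Perm (Fin (n + 1))) : Equiv.Perm (Fin n) :=
  Equiv.removeNone (finSuccEquivLast.symm.trans (s.trans finSuccEquivLast))

/-- The canonical projection `p_{n,n+1} : G ≀ S(n+1) → G ≀ S(n)`. -/
def proj (x : WP G (n + 1)) : WP G n :=
  ⟨fun i => if x.right (Fin.last n) = Fin.castSucc i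
      then x.left (Fin.castSucc i) * x.left (Fin.last n)
      else x.left (Fin.castSucc i),
    projPerm x.right⟩

def castEquiv {m n : ℕ} (h : m ≤ n) : Fin m ≃ {i : Fin n // (i : ℕ) < m} where
  toFun i := ⟨⟨(i : ℕ), lt_of_lt_of_le i.isLt h⟩, i.isLt⟩
  invFun i := ⟨(i.1 : ℕ), i.2⟩
  left_inv i := rfl
  right_inv i := rfl

/-- The canonical embedding `ι_{m,n} : G ≀ S(m) → G ≀ S(n)` for `m ≤ n`. -/
def emb {m n : ℕ} (h : m ≤ n) (x : WP G m) : WP G n :=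
  ⟨fun i => if hi : (i : ℕ) < m then x.left ⟨(i : ℕ), hi⟩ else 1,
    x.right.extendDomain (castEquiv h)⟩

end WP

/-- `c` is a conjugacy class of `G`. -/
def IsConjClass {G : Type*} [Group G] (c : Set G) : Prop :=
  ∃ g : G, c = {h | IsConj g h}

end WreathPaper

namespace WreathPaper
namespace WP

variable {G : Type*} [Group G] {n : ℕ}


lemma pow_succ_apply {α : Type*} (σ : Equiv.Perm α) (m : ℕ) (x : α) :
    (σ ^ (m + 1)) x = σ ((σ ^ m) x) := by
  rw [pow_succ', Equiv.Perm.mul_apply]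

lemma perm_mem_periodicPts {m : ℕ} (σ : Equiv.Perm (Fin m)) (x : Fin m) :
    x ∈ Function.periodicPts ⇑σ :=
  ⟨orderOf σ, orderOf_pos σ, by
    show (⇑σ)^[orderOf σ] x = x
    rw [Equiv.Perm.iterate_eq_pow, pow_orderOf_eq_one]; rfl⟩

lemma isPeriodicPt_iff {m : ℕ} (σ : Equiv.Perm (Fin m)) (t : ℕ) (x : Fin m) :
    Function.IsPeriodicPt ⇑σ t x ↔ (σ ^ t) x = x := Iff.rfl

lemma minimalPeriod_pos {m : ℕ} (σ : Equiv.Perm (Fin m)) (x : Fin m) :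
    0 < Function.minimalPeriod ⇑σ x :=
  Function.minimalPeriod_pos_of_mem_periodicPts (perm_mem_periodicPts σ x)

lemma pow_minimalPeriod_apply {m : ℕ} (σ : Equiv.Perm (Fin m)) (x : Fin m) :
    (σ ^ Function.minimalPeriod ⇑σ x) x = x :=
  Function.iterate_minimalPeriod (f := ⇑σ) (x := x)

lemma castSucc_projPerm (s : Equiv.Perm (Fin (n+1))) (i : Fin n) :
    Fin.castSucc (projPerm s i) =
      if s (Fin.castSucc i) = Fin.last n then s (Fin.last n) else s (Fin.castSucc i) := by
  set e := finSuccEquivLast.symm.trans (s.trans finSuccEquivLast) with he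
  have he1 : ∀ x : Fin n, e (some x) = finSuccEquivLast (s (Fin.castSucc x)) := by
    intro x; simp [he, Equiv.trans_apply]
  have he2 : e none = finSuccEquivLast (s (Fin.last n)) := by
    simp [he, Equiv.trans_apply]
  by_cases h : s (Fin.castSucc i) = Fin.last n
  · have hnone : e (some i) = none := by rw [he1, h, finSuccEquivLast_last]
    have h2 := Equiv.removeNone_none e hnone
    rw [he2] at h2
    have hlast : s (Fin.last n) ≠ Fin.last n := by
      intro hc; exact (Fin.castSucc_lt_last i).ne (s.injective (h.trans hc.symm))
    obtain ⟨y, hy⟩ := Fin.eq_castSucc_of_ne_last hlast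
    rw [← hy, finSuccEquivLast_castSucc] at h2
    rw [if_pos h, ← hy]
    exact congrArg Fin.castSucc (Option.some_injective _ h2)
  · obtain ⟨y, hy⟩ := Fin.eq_castSucc_of_ne_last h
    have hsome : e (some i) = some y := by rw [he1, ← hy, finSuccEquivLast_castSucc]
    have h2 := Equiv.removeNone_some e ⟨y, hsome⟩
    rw [hsome] at h2
    rw [if_neg h, ← hy]
    exact congrArg Fin.castSucc (Option.some_injective _ h2)

/-- partial products along an orbit -/
noncomputable def pprod (x : WP G n) (i : Fin n) (m : ℕ) : G :=
  ((List.range m).reverse.map fun j => x.left ((x.right ^ j) i)).prod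

lemma pprod_zero (x : WP G n) (i : Fin n) : pprod x i 0 = 1 := rfl

lemma pprod_succ (x : WP G n) (i : Fin n) (m : ℕ) :
    pprod x i (m + 1) = x.left ((x.right ^ m) i) * pprod x i m := by
  simp [pprod, List.range_succ]

lemma cycleProd_eq_pprod (x : WP G n) (i : Fin n) :
    cycleProd x i = pprod x i (Function.minimalPeriod (⇑x.right) i) := rfl

open Classical in
lemma cycleCount_eq_sum (x : WP G n) (c : Set G) :
    cycleCount x c = ∑ i : Fin n,
      if (∀ m : ℕ, i ≤ (x.right ^ m) i) ∧ cycleProd x i ∈ c then 1 else 0 := by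
  classical
  rw [cycleCount, Nat.card_eq_fintype_card, Fintype.card_subtype, Finset.card_filter]


section Fix
variable (y : WP G (n+1)) (hfix : y.right (Fin.last n) = Fin.last n)
include hfix

lemma fix_step (j : Fin n) :
    Fin.castSucc (projPerm y.right j) = y.right (Fin.castSucc j) := by
  rw [castSucc_projPerm, if_neg]
  intro h
  exact (Fin.castSucc_lt_last j).ne (y.right.injective (h.trans hfix.symm))

lemma fix_iter (m : ℕ) (i : Fin n) :
    (y.right ^ m) (Fin.castSucc i) = Fin.castSucc ((projPerm y.right ^ m) i) := by
  induction m generalizing i with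
  | zero => simp
  | succ m ih =>
      rw [pow_succ_apply, pow_succ_apply, ih, fix_step y hfix]

lemma fix_iter_last (m : ℕ) : (y.right ^ m) (Fin.last n) = Fin.last n := by
  induction m with
  | zero => simp
  | succ m ih => rw [pow_succ_apply, ih, hfix]

lemma fix_minimalPeriod (i : Fin n) :
    Function.minimalPeriod (⇑y.right) (Fin.castSucc i)
      = Function.minimalPeriod (⇑(projPerm y.right)) i := by
  rw [Function.minimalPeriod_eq_minimalPeriod_iff]
  intro m
  rw [isPeriodicPt_iff, isPeriodicPt_iff, fix_iter y hfix]
  exact ⟨fun h => Fin.castSucc_injective n h, fun h => by rw [h]⟩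

lemma fix_cycleProd (i : Fin n) : cycleProd y (Fin.castSucc i) = cycleProd (proj y) i := by
  have hr : (proj y).right = projPerm y.right := rfl
  rw [cycleProd, cycleProd, hr, fix_minimalPeriod y hfix]
  congr 1
  apply List.map_congr_left
  intro j _
  rw [fix_iter y hfix]
  have hl : ∀ z : Fin n, (proj y).left z =
      if y.right (Fin.last n) = Fin.castSucc z
      then y.left (Fin.castSucc z) * y.left (Fin.last n)
      else y.left (Fin.castSucc z) := fun z => rfl
  rw [hl, if_neg (fun h => (Fin.castSucc_lt_last _).ne' (hfix.symm.trans h))]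

lemma fix_minrep (i : Fin n) :
    (∀ m : ℕ, Fin.castSucc i ≤ (y.right ^ m) (Fin.castSucc i))
      ↔ (∀ m : ℕ, i ≤ ((proj y).right ^ m) i) := by
  have hr : (proj y).right = projPerm y.right := rfl
  rw [hr]
  constructor
  · intro h m
    have := h m
    rwa [fix_iter y hfix, Fin.castSucc_le_castSucc_iff] at this
  · intro h m
    rw [fix_iter y hfix, Fin.castSucc_le_castSucc_iff]
    exact h m

lemma fix_cycleProd_last : cycleProd y (Fin.last n) = y.left (Fin.last n) := by
  have h1 : Function.minimalPeriod (⇑y.right) (Fin.last n) = 1 :=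
    Function.minimalPeriod_eq_one_iff_isFixedPt.2 hfix
  rw [cycleProd, h1]
  simp [List.range_succ]

end Fix

/-- index correspondence function for the move case -/
def fIdx (s : Equiv.Perm (Fin n)) (a i : Fin n) : ℕ → ℕ
  | 0 => 0
  | m+1 => fIdx s a i m + (if (s ^ m) i = a then 2 else 1)

lemma fIdx_succ (s : Equiv.Perm (Fin n)) (a i : Fin n) (m : ℕ) :
    fIdx s a i (m+1) = fIdx s a i m + (if (s ^ m) i = a then 2 else 1) := rfl

lemma fIdx_strictMono (s : Equiv.Perm (Fin n)) (a i : Fin n) :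
    StrictMono (fIdx s a i) := by
  apply strictMono_nat_of_lt_succ
  intro m
  rw [fIdx_succ]
  split <;> omega

lemma le_fIdx (s : Equiv.Perm (Fin n)) (a i : Fin n) (m : ℕ) : m ≤ fIdx s a i m := by
  induction m with
  | zero => rfl
  | succ m ih => rw [fIdx_succ]; split <;> omega

section Move

variable (sb : Equiv.Perm (Fin (n+1))) (a b : Fin n)
  (ha : sb (Fin.castSucc a) = Fin.last n) (hb : sb (Fin.last n) = Fin.castSucc b)

include ha hb

lemma move_sa : projPerm sb a = b := by
  apply Fin.castSucc_injective
  rw [castSucc_projPerm, if_pos ha, hb]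

omit hb

lemma move_step (j : Fin n) (hj : j ≠ a) :
    Fin.castSucc (projPerm sb j) = sb (Fin.castSucc j) := by
  rw [castSucc_projPerm, if_neg]
  intro h
  exact hj (Fin.castSucc_injective n (sb.injective (h.trans ha.symm)))

include hb

lemma move_M1 (i : Fin n) (m : ℕ) :
    (sb ^ (fIdx (projPerm sb) a i m)) (Fin.castSucc i)
      = Fin.castSucc ((projPerm sb ^ m) i) := by
  induction m with
  | zero => simp [fIdx]
  | succ m ih =>
      rw [fIdx_succ]
      by_cases h : (projPerm sb ^ m) i = a
      · rw [if_pos h]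
        have : fIdx (projPerm sb) a i m + 2 = fIdx (projPerm sb) a i m + 1 + 1 := rfl
        rw [this, pow_succ_apply, pow_succ_apply, ih, h, ha, hb, pow_succ_apply, h,
          move_sa sb a b ha hb]
      · rw [if_neg h, pow_succ_apply, ih, pow_succ_apply,
          ← move_step sb a ha _ h]

lemma move_M2 (i : Fin n) (t : ℕ) :
    ∃ m : ℕ,
      (t = fIdx (projPerm sb) a i m
          ∧ (sb ^ t) (Fin.castSucc i) = Fin.castSucc ((projPerm sb ^ m) i))
      ∨ (t = fIdx (projPerm sb) a i m + 1 ∧ (projPerm sb ^ m) i = a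
          ∧ (sb ^ t) (Fin.castSucc i) = Fin.last n) := by
  induction t with
  | zero => exact ⟨0, Or.inl ⟨rfl, by simp⟩⟩
  | succ t ih =>
      obtain ⟨m, h | h⟩ := ih
      · by_cases hm : (projPerm sb ^ m) i = a
        · exact ⟨m, Or.inr ⟨by rw [h.1], hm, by rw [pow_succ_apply, h.2, hm, ha]⟩⟩
        · refine ⟨m + 1, Or.inl ⟨?_, ?_⟩⟩
          · rw [fIdx_succ, if_neg hm, h.1]
          · rw [pow_succ_apply, h.2, pow_succ_apply, ← move_step sb a ha _ hm]
      · refine ⟨m + 1, Or.inl ⟨?_, ?_⟩⟩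
        · rw [fIdx_succ, if_pos h.2.1, h.1]
        · rw [pow_succ_apply, h.2.2, hb, pow_succ_apply, h.2.1, move_sa sb a b ha hb]

lemma move_minrep (i : Fin n) :
    (∀ m : ℕ, i ≤ (projPerm sb ^ m) i)
      ↔ (∀ t : ℕ, Fin.castSucc i ≤ (sb ^ t) (Fin.castSucc i)) := by
  constructor
  · intro h t
    obtain ⟨m, hm | hm⟩ := move_M2 sb a b ha hb i t
    · rw [hm.2, Fin.castSucc_le_castSucc_iff]; exact h m
    · rw [hm.2.2]; exact Fin.le_last _
  · intro h m
    have := h (fIdx (projPerm sb) a i m)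
    rwa [move_M1 sb a b ha hb, Fin.castSucc_le_castSucc_iff] at this

lemma move_period (i : Fin n) :
    Function.minimalPeriod (⇑sb) (Fin.castSucc i)
      = fIdx (projPerm sb) a i (Function.minimalPeriod (⇑(projPerm sb)) i) := by
  set s := projPerm sb with hs
  set r := Function.minimalPeriod (⇑s) i with hrdef
  have hr : 0 < r := minimalPeriod_pos s i
  have hfr : 0 < fIdx s a i r := lt_of_lt_of_le hr (le_fIdx s a i r)
  have hper : Function.IsPeriodicPt (⇑sb) (fIdx s a i r) (Fin.castSucc i) := by
    rw [isPeriodicPt_iff, move_M1 sb a b ha hb, pow_minimalPeriod_apply]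
  set R := Function.minimalPeriod (⇑sb) (Fin.castSucc i) with hRdef
  have hR : 0 < R := minimalPeriod_pos sb (Fin.castSucc i)
  have hle : R ≤ fIdx s a i r := hper.minimalPeriod_le hfr
  rcases lt_or_eq_of_le hle with hlt | heq
  · exfalso
    have hRper : (sb ^ R) (Fin.castSucc i) = Fin.castSucc i := pow_minimalPeriod_apply sb _
    obtain ⟨m, hm | hm⟩ := move_M2 sb a b ha hb i R
    simp only [← hs] at hm
    · have hmr : m < r := by
        by_contra hge
        have := (fIdx_strictMono s a i).monotone (not_lt.mp hge)
        omega
      have : (s ^ m) i = i := by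
        apply Fin.castSucc_injective
        rw [← hm.2, hRper]
      have hm0 : m = 0 :=
        Function.IsPeriodicPt.eq_zero_of_lt_minimalPeriod (this) hmr
      rw [hm0] at hm
      have : R = 0 := by rw [hm.1]; rfl
      omega
    · rw [hRper] at hm
      exact (Fin.castSucc_lt_last i).ne hm.2.2
  · exact heq

omit ha hb in
lemma move_last_not_minrep (hmove : sb (Fin.last n) ≠ Fin.last n) :
    ¬ (∀ m : ℕ, Fin.last n ≤ (sb ^ m) (Fin.last n)) := by
  intro h
  have h1 := h 1
  rw [pow_one] at h1
  exact hmove (le_antisymm (Fin.le_last _) h1)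

end Move

section MoveProd

variable (y : WP G (n+1)) (a b : Fin n)
  (ha : y.right (Fin.castSucc a) = Fin.last n)
  (hb : y.right (Fin.last n) = Fin.castSucc b)

include ha hb

lemma move_projleft (z : Fin n) :
    (proj y).left z = if z = b then y.left (Fin.castSucc b) * y.left (Fin.last n)
      else y.left (Fin.castSucc z) := by
  have hl : (proj y).left z =
      if y.right (Fin.last n) = Fin.castSucc z
      then y.left (Fin.castSucc z) * y.left (Fin.last n)
      else y.left (Fin.castSucc z) := rfl
  rw [hl]
  by_cases hz : z = b
  · rw [if_pos (by rw [hz, hb]), if_pos hz, hz]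
  · rw [if_neg (fun hcon => hz (Fin.castSucc_injective n (hb.symm.trans hcon)).symm), if_neg hz]

lemma move_cycleProd (i : Fin n) :
    ∃ u v : G, cycleProd y (Fin.castSucc i) = u * v ∧ cycleProd (proj y) i = v * u := by
  classical
  set s : Equiv.Perm (Fin n) := (proj y).right with hs
  set r := Function.minimalPeriod (⇑s) i with hrdef
  have hr : 0 < r := minimalPeriod_pos s i
  have hsa : s a = b := move_sa y.right a b ha hb
  have hinj : ∀ m1, m1 < r → ∀ m2, m2 < r → (s ^ m1) i = (s ^ m2) i → m1 = m2 := by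
    intro m1 h1 m2 h2 hEq
    exact Function.iterate_injOn_Iio_minimalPeriod (f := ⇑s) (x := i) h1 h2 hEq
  have hM1 : ∀ m : ℕ, (y.right ^ (fIdx s a i m)) (Fin.castSucc i)
      = Fin.castSucc ((s ^ m) i) := fun m => move_M1 y.right a b ha hb i m
  have hMP : Function.minimalPeriod (⇑y.right) (Fin.castSucc i) = fIdx s a i r :=
    move_period y.right a b ha hb i
  have hcyY : cycleProd y (Fin.castSucc i) = pprod y (Fin.castSucc i) (fIdx s a i r) := by
    rw [cycleProd_eq_pprod, hMP]
  have hcyP : cycleProd (proj y) i = pprod (proj y) i r := by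
    rw [cycleProd_eq_pprod]
  set gl := y.left (Fin.last n) with hgl
  by_cases hpa : ∃ p, p < r ∧ (s ^ p) i = a
  · obtain ⟨p, hpr, hp⟩ := hpa
    have huniq_a : ∀ m, m < r → ((s ^ m) i = a ↔ m = p) := by
      intro m hm
      exact ⟨fun h => hinj m hm p hpr (h.trans hp.symm), fun h => h ▸ hp⟩
    have hq : (s ^ (p+1)) i = b := by rw [pow_succ_apply, hp, hsa]
    by_cases hwrap : p + 1 = r
    · -- wrap case : b is at position 0, i.e. i = b
      have hib : i = b := by
        have h2 := hq; rw [hwrap] at h2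
        rw [← h2, hrdef, pow_minimalPeriod_apply]
      rcases Nat.eq_or_lt_of_le hr with hr1 | hr2
      · -- r = 1 : i = a = b
        have hp0 : p = 0 := by omega
        have hia : i = a := by
          have := hp; rw [hp0, pow_zero] at this; rw [← this]; rfl
        have hf1 : fIdx s a i 1 = 2 := by
          rw [fIdx_succ, if_pos (by rw [pow_zero]; show i = a; exact hia)]
          rfl
        refine ⟨gl, y.left (Fin.castSucc a), ?_, ?_⟩
        · rw [hcyY, ← hr1, hf1,
            show (2:ℕ) = 1 + 1 from rfl, pprod_succ, pprod_succ, pprod_zero]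
          have h1 : (y.right ^ 1) (Fin.castSucc i) = Fin.last n := by
            rw [pow_one, hia, ha]
          have h0 : (y.right ^ 0) (Fin.castSucc i) = Fin.castSucc a := by
            rw [pow_zero, hia]; rfl
          rw [h1, h0, mul_one]
        · rw [hcyP, ← hr1, pprod_succ, pprod_zero, pow_zero]
          have h0 : ((1 : Equiv.Perm (Fin n))) i = i := rfl
          rw [h0, move_projleft y a b ha hb, if_pos hib, mul_one, ← hgl,
            hib.symm.trans hia]
      · -- r ≥ 2, p ≥ 1, i = b, wrap
        have hp1 : 1 ≤ p := by omega
        have hab : a ≠ b := by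
          intro hcon
          have h0 : (s ^ 0) i = i := rfl
          have : p = 0 := hinj p hpr 0 hr (by rw [hp, h0, hcon, hib])
          omega
        have huniq_b : ∀ m, m < r → ((s ^ m) i = b ↔ m = 0) := by
          intro m hm
          have h0 : (s ^ 0) i = i := rfl
          refine ⟨fun h => hinj m hm 0 hr (by rw [h, h0, ← hib]), ?_⟩
          intro h; rw [h, h0, hib]
        -- invariant up to p
        have hinv : ∀ m, m ≤ p → fIdx s a i m = m ∧
            pprod (proj y) i m = pprod y (Fin.castSucc i) m * (if m = 0 then 1 else gl) := by
          intro m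
          induction m with
          | zero => intro _; refine ⟨rfl, by rw [pprod_zero, pprod_zero, if_pos rfl, mul_one]⟩
          | succ m ih =>
              intro hm1
              have hmp : m < p := by omega
              have hmr : m < r := by omega
              obtain ⟨ihf, ihp⟩ := ih (by omega)
              have hma : (s ^ m) i ≠ a := by
                intro hcon; have := (huniq_a m hmr).1 hcon; omega
              constructor
              · rw [fIdx_succ, if_neg hma, ihf]
              · rw [pprod_succ, pprod_succ, move_projleft y a b ha hb]
                have hy : (y.right ^ m) (Fin.castSucc i) = Fin.castSucc ((s ^ m) i) := by
                  have := hM1 m; rwa [ihf] at this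
                rw [hy]
                by_cases hm0 : m = 0
                · subst hm0
                  have hib' : (s ^ 0) i = b := by rw [pow_zero]; show i = b; exact hib
                  rw [if_pos hib', hib', ihp, if_pos rfl, if_neg (by omega)]
                  simp [pprod_zero, mul_assoc]
                  exact hgl.symm
                · have hmb : (s ^ m) i ≠ b := by
                    intro hcon; exact hm0 ((huniq_b m hmr).1 hcon)
                  rw [if_neg hmb, ihp, if_neg hm0, if_neg (by omega)]
                  simp [mul_assoc]
                  rfl
        obtain ⟨hfp, hpinv⟩ := hinv p le_rfl
        have hfr : fIdx s a i r = p + 1 + 1 := by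
          rw [← hwrap, fIdx_succ, hfp, if_pos hp]
        have hyP : (y.right ^ p) (Fin.castSucc i) = Fin.castSucc a := by
          have := hM1 p; rw [hfp] at this; rw [this, hp]
        have hyR : (y.right ^ (p+1)) (Fin.castSucc i) = Fin.last n := by
          rw [pow_succ_apply, hyP, ha]
        refine ⟨gl, y.left (Fin.castSucc a) * pprod y (Fin.castSucc i) p, ?_, ?_⟩
        · rw [hcyY, hfr, pprod_succ, pprod_succ, hyP, hyR, ← hgl]
        · rw [hcyP, ← hwrap, pprod_succ, hp, move_projleft y a b ha hb, if_neg hab,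
            hpinv, if_neg (by omega), mul_assoc]
    · -- interior case : p + 1 < r
      have hq1 : p + 1 < r := by omega
      have hab : a ≠ b := by
        intro hcon
        have : p = p + 1 := hinj p hpr (p+1) hq1 (by rw [hp, hq, hcon])
        omega
      have huniq_b : ∀ m, m < r → ((s ^ m) i = b ↔ m = p + 1) := by
        intro m hm
        exact ⟨fun h => hinj m hm (p+1) hq1 (h.trans hq.symm), fun h => h ▸ hq⟩
      have hinv : ∀ m, m ≤ r → fIdx s a i m = (if m ≤ p then m else m + 1) ∧
          pprod y (Fin.castSucc i) (fIdx s a i m)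
            = (if m = p + 1 then gl else 1) * pprod (proj y) i m := by
        intro m
        induction m with
        | zero =>
            intro _
            refine ⟨by rw [if_pos (Nat.zero_le p)]; rfl, ?_⟩
            rw [show fIdx s a i 0 = 0 from rfl, pprod_zero, if_neg (by omega), one_mul,
              pprod_zero]
        | succ m ih =>
            intro hm1
            have hmr : m < r := by omega
            obtain ⟨ihf, ihp⟩ := ih (by omega)
            have hyM : (y.right ^ (fIdx s a i m)) (Fin.castSucc i)
                = Fin.castSucc ((s ^ m) i) := hM1 m
            by_cases hma : (s ^ m) i = a
            · -- m = p
              have hmp : m = p := (huniq_a m hmr).1 hma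
              subst hmp
              have hf : fIdx s a i (m+1) = m + 2 := by
                rw [fIdx_succ, if_pos hma, ihf, if_pos le_rfl]
              refine ⟨by rw [hf, if_neg (by omega)], ?_⟩
              have hyA : (y.right ^ (fIdx s a i m)) (Fin.castSucc i) = Fin.castSucc a := by
                rw [hyM, hma]
              have hyL : (y.right ^ (fIdx s a i m + 1)) (Fin.castSucc i) = Fin.last n := by
                rw [pow_succ_apply, hyA, ha]
              have hf2 : fIdx s a i (m+1) = fIdx s a i m + 1 + 1 := by
                rw [hf, ihf, if_pos le_rfl]
              rw [hf2, pprod_succ, pprod_succ, hyL, hyA, ihp, if_neg (by omega),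
                if_pos rfl, one_mul, pprod_succ, move_projleft y a b ha hb, hma,
                if_neg hab, ← hgl]
            · by_cases hmb : (s ^ m) i = b
              · -- m = p + 1
                have hmp : m = p + 1 := (huniq_b m hmr).1 hmb
                have hf : fIdx s a i (m+1) = m + 2 := by
                  rw [fIdx_succ, if_neg hma, ihf, if_neg (by omega)]
                refine ⟨by rw [hf, if_neg (by omega)], ?_⟩
                have hf1 : fIdx s a i (m+1) = fIdx s a i m + 1 := by
                  rw [fIdx_succ, if_neg hma]
                rw [hf1, pprod_succ, hyM, hmb, ihp, if_pos hmp, pprod_succ,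
                  move_projleft y a b ha hb, hmb, if_pos rfl, if_neg (by omega)]
                rw [one_mul, ← hgl, mul_assoc]
              · -- generic step
                have hmp : m ≠ p := fun h => hma (h ▸ hp)
                have hmq : m ≠ p + 1 := fun h => hmb (h ▸ hq)
                have hf1 : fIdx s a i (m+1) = fIdx s a i m + 1 := by
                  rw [fIdx_succ, if_neg hma]
                constructor
                · rw [hf1, ihf]
                  by_cases hle : m ≤ p
                  · have hle2 : m + 1 ≤ p := by omega
                    rw [if_pos hle, if_pos hle2]
                  · rw [if_neg hle, if_neg (by omega)]
                · rw [hf1, pprod_succ, hyM, ihp, if_neg hmq, if_neg (by omega), one_mul,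
                    one_mul, pprod_succ, move_projleft y a b ha hb, if_neg hmb]
      obtain ⟨hfr, hprod⟩ := hinv r le_rfl
      refine ⟨1, cycleProd (proj y) i, ?_, by rw [mul_one]⟩
      rw [one_mul, hcyY, hprod, if_neg (by omega), one_mul, hcyP]
  · -- a (hence b) not in the orbit of i
    push_neg at hpa
    have hnb : ∀ m, m < r → (s ^ m) i ≠ b := by
      intro m hm hcon
      rcases Nat.eq_zero_or_pos m with hm0 | hm1
      · subst hm0
        have hib : i = b := by rw [← hcon, pow_zero]; rfl
        have : (s ^ (r-1)) i = a := by
          apply s.injective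
          have : (s ^ r) i = i := pow_minimalPeriod_apply s i
          have hstep : s ((s ^ (r-1)) i) = (s ^ r) i := by
            rw [← pow_succ_apply, Nat.sub_add_cancel hr]
          rw [hstep, this, hsa, hib]
        exact hpa (r-1) (by omega) this
      · have : (s ^ (m-1)) i = a := by
          apply s.injective
          have hstep : s ((s ^ (m-1)) i) = (s ^ m) i := by
            rw [← pow_succ_apply, Nat.sub_add_cancel hm1]
          rw [hstep, hcon, hsa]
        exact hpa (m-1) (by omega) this
    have hinv : ∀ m, m ≤ r → fIdx s a i m = m ∧
        pprod y (Fin.castSucc i) m = pprod (proj y) i m := by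
      intro m
      induction m with
      | zero => exact fun _ => ⟨rfl, rfl⟩
      | succ m ih =>
          intro hm1
          have hmr : m < r := by omega
          obtain ⟨ihf, ihp⟩ := ih (by omega)
          refine ⟨by rw [fIdx_succ, if_neg (hpa m hmr), ihf], ?_⟩
          have hyM : (y.right ^ m) (Fin.castSucc i) = Fin.castSucc ((s ^ m) i) := by
            have := hM1 m; rwa [ihf] at this
          rw [pprod_succ, pprod_succ, hyM, ihp, move_projleft y a b ha hb,
            if_neg (hnb m hmr)]
      
    obtain ⟨hfr, hprod⟩ := hinv r le_rfl
    refine ⟨1, cycleProd (proj y) i, ?_, by rw [mul_one]⟩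
    rw [one_mul, hcyY, hfr, hprod, hcyP]

end MoveProd

section Count

lemma isConjClass_mul_mem_comm {c : Set G} (hc : IsConjClass c) (u v : G) :
    u * v ∈ c ↔ v * u ∈ c := by
  obtain ⟨g, rfl⟩ := hc
  have h : IsConj (u * v) (v * u) := by
    rw [isConj_iff]
    exact ⟨v, by group⟩
  exact ⟨fun hm => hm.trans h, fun hm => hm.trans h.symm⟩

lemma move_exists_ab (y : WP G (n+1)) (hmove : y.right (Fin.last n) ≠ Fin.last n) :
    ∃ a b : Fin n, y.right (Fin.castSucc a) = Fin.last n
      ∧ y.right (Fin.last n) = Fin.castSucc b := by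
  obtain ⟨b, hb⟩ := Fin.eq_castSucc_of_ne_last hmove
  have h2 : y.right⁻¹ (Fin.last n) ≠ Fin.last n := by
    intro hcon
    exact hmove (by conv_lhs => rw [← hcon, ← Equiv.Perm.mul_apply, mul_inv_cancel, Equiv.Perm.one_apply])
  obtain ⟨a, ha⟩ := Fin.eq_castSucc_of_ne_last h2
  exact ⟨a, b, by rw [ha, ← Equiv.Perm.mul_apply, mul_inv_cancel, Equiv.Perm.one_apply], hb.symm⟩

open Classical in
lemma cycleCount_proj (y : WP G (n+1)) (c : Set G) (hc : IsConjClass c) :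
    cycleCount y c = cycleCount (proj y) c +
      (if y.right (Fin.last n) = Fin.last n ∧ y.left (Fin.last n) ∈ c then 1 else 0) := by
  classical
  rw [cycleCount_eq_sum, cycleCount_eq_sum, Fin.sum_univ_castSucc]
  congr 1
  · apply Finset.sum_congr rfl
    intro i _
    by_cases hfix : y.right (Fin.last n) = Fin.last n
    · exact if_congr (and_congr (fix_minrep y hfix i)
        (by rw [fix_cycleProd y hfix i])) rfl rfl
    · obtain ⟨a, b, ha, hb⟩ := move_exists_ab y hfix
      refine if_congr (and_congr ((move_minrep y.right a b ha hb i).symm) ?_) rfl rfl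
      obtain ⟨u, v, hu, hv⟩ := move_cycleProd y a b ha hb i
      rw [hu, hv]
      exact isConjClass_mul_mem_comm hc u v
  · by_cases hfix : y.right (Fin.last n) = Fin.last n
    · have h1 : ∀ m : ℕ, Fin.last n ≤ (y.right ^ m) (Fin.last n) := by
        intro m; rw [fix_iter_last y hfix m]
      have h2 : cycleProd y (Fin.last n) = y.left (Fin.last n) := fix_cycleProd_last y hfix
      have h3 : ((∀ m : ℕ, Fin.last n ≤ (y.right ^ m) (Fin.last n))
            ∧ cycleProd y (Fin.last n) ∈ c)
          ↔ (y.right (Fin.last n) = Fin.last n ∧ y.left (Fin.last n) ∈ c) := by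
        rw [h2]
        exact ⟨fun hh => ⟨hfix, hh.2⟩, fun hh => ⟨h1, hh.2⟩⟩
      exact if_congr h3 rfl rfl
    · exact if_congr (iff_of_false
        (fun hcon => move_last_not_minrep y.right hfix hcon.1)
        (fun hcon => hfix hcon.1)) rfl rfl

end Count

section Emb

lemma extend_castSucc (τ : Equiv.Perm (Fin n)) (m : Fin n) :
    τ.extendDomain (castEquiv (Nat.le_succ n)) (Fin.castSucc m) = Fin.castSucc (τ m) := by
  have h : ((Fin.castSucc m : Fin (n+1)) : ℕ) < n := m.isLt
  rw [τ.extendDomain_apply_subtype (castEquiv (Nat.le_succ n)) h]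
  have h2 : (castEquiv (Nat.le_succ n)).symm ⟨Fin.castSucc m, h⟩ = m := by
    apply Fin.ext; rfl
  rw [h2]
  apply Fin.ext; rfl

lemma extend_last (τ : Equiv.Perm (Fin n)) :
    τ.extendDomain (castEquiv (Nat.le_succ n)) (Fin.last n) = Fin.last n := by
  apply Equiv.Perm.extendDomain_apply_not_subtype
  simp

lemma extend_eq_last_iff (τ : Equiv.Perm (Fin n)) (x : Fin (n+1)) :
    τ.extendDomain (castEquiv (Nat.le_succ n)) x = Fin.last n ↔ x = Fin.last n := by
  constructor
  · intro h
    have := extend_last τ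
    exact (τ.extendDomain (castEquiv (Nat.le_succ n))).injective (h.trans this.symm)
  · intro h; rw [h, extend_last]

lemma extend_inv_castSucc (τ : Equiv.Perm (Fin n)) (m : Fin n) :
    (τ.extendDomain (castEquiv (Nat.le_succ n)))⁻¹ (Fin.castSucc m)
      = Fin.castSucc (τ⁻¹ m) := by
  rw [Equiv.Perm.extendDomain_inv, extend_castSucc]

lemma extend_inv_last (τ : Equiv.Perm (Fin n)) :
    (τ.extendDomain (castEquiv (Nat.le_succ n)))⁻¹ (Fin.last n) = Fin.last n := by
  rw [Equiv.Perm.extendDomain_inv, extend_last]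

lemma projPerm_extend_mul (τ : Equiv.Perm (Fin n)) (sb : Equiv.Perm (Fin (n+1))) :
    projPerm (τ.extendDomain (castEquiv (Nat.le_succ n)) * sb) = τ * projPerm sb := by
  set σ := τ.extendDomain (castEquiv (Nat.le_succ n)) with hσ
  have hlastiff : ∀ x, σ x = Fin.last n ↔ x = Fin.last n := fun x => extend_eq_last_iff τ x
  have hcs : ∀ z, σ (Fin.castSucc z) = Fin.castSucc (τ z) := fun z => extend_castSucc τ z
  apply Equiv.ext
  intro m
  apply Fin.castSucc_injective
  have hR : Fin.castSucc ((τ * projPerm sb) m) = σ (Fin.castSucc (projPerm sb m)) := by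
    rw [Equiv.Perm.mul_apply, hcs]
  rw [hR, castSucc_projPerm, castSucc_projPerm, apply_ite ⇑σ]
  simp only [Equiv.Perm.mul_apply]
  by_cases h : sb (Fin.castSucc m) = Fin.last n
  · rw [if_pos h]; exact if_pos ((hlastiff _).2 h)
  · rw [if_neg h]; exact if_neg (fun hc => h ((hlastiff _).1 hc))

lemma emb_one_left (τ : Equiv.Perm (Fin n)) :
    (emb (Nat.le_succ n) (⟨1, τ⟩ : WP G n)).left = 1 := by
  funext idx
  show (if hi : (idx : ℕ) < n then _ else 1) = _
  split <;> rfl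

lemma emb_mul_left (τ : Equiv.Perm (Fin n)) (x : WP G (n+1)) (z : Fin (n+1)) :
    (emb (Nat.le_succ n) (⟨1, τ⟩ : WP G n) * x).left z
      = x.left ((τ.extendDomain (castEquiv (Nat.le_succ n)))⁻¹ z) := by
  rw [SemidirectProduct.mul_left, emb_one_left, one_mul]
  rfl

lemma emb_mul_right (τ : Equiv.Perm (Fin n)) (x : WP G (n+1)) :
    (emb (Nat.le_succ n) (⟨1, τ⟩ : WP G n) * x).right
      = τ.extendDomain (castEquiv (Nat.le_succ n)) * x.right := by
  rw [SemidirectProduct.mul_right]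
  rfl

lemma proj_left_apply (x : WP G (n+1)) (z : Fin n) :
    (proj x).left z = if x.right (Fin.last n) = Fin.castSucc z
      then x.left (Fin.castSucc z) * x.left (Fin.last n)
      else x.left (Fin.castSucc z) := rfl

lemma proj_emb_mul (τ : Equiv.Perm (Fin n)) (x : WP G (n+1)) :
    proj (emb (Nat.le_succ n) (⟨1, τ⟩ : WP G n) * x) = (⟨1, τ⟩ : WP G n) * proj x := by
  apply SemidirectProduct.ext
  · funext m
    have hR : ((⟨1, τ⟩ : WP G n) * proj x).left m = (proj x).left (τ⁻¹ m) := by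
      rw [SemidirectProduct.mul_left, Pi.mul_apply]
      show 1 * _ = _
      rw [one_mul]
      rfl
    rw [hR, proj_left_apply]
    simp only [emb_mul_left, emb_mul_right]
    rw [Equiv.Perm.mul_apply, extend_inv_last, extend_inv_castSucc, proj_left_apply]
    by_cases h : x.right (Fin.last n) = Fin.castSucc (τ⁻¹ m)
    · rw [if_pos (by rw [h, extend_castSucc, ← Equiv.Perm.mul_apply, mul_inv_cancel, Equiv.Perm.one_apply]), if_pos h]
    · rw [if_neg ?_, if_neg h]
      intro hc
      apply h
      have h3 := congrArg (⇑(τ.extendDomain (castEquiv (Nat.le_succ n)))⁻¹) hc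
      rwa [← Equiv.Perm.mul_apply, inv_mul_cancel, Equiv.Perm.one_apply, extend_inv_castSucc] at h3
  · show projPerm _ = τ * projPerm x.right
    rw [emb_mul_right, projPerm_extend_mul]

end Emb

end WP
end WreathPaper


namespace WreathPaper

open WP in
/-- The cocycle compatibility condition for left multiplication by an element
`w = (e_{Gⁿ}, (i j))` whose permutation part is a transposition. -/
theorem cocycle_condition_transposition {G : Type*} [Group G] {n k : ℕ}
    (c : Fin k → Set G) (hconj : ∀ l, IsConjClass (c l))
    (hpart : ∀ g : G, ∃! l, g ∈ c l) (i j : Fin n) (hij : i < j) (l : Fin k)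
    (xn : WP G n) (xn1 : WP G (n + 1)) (h : proj xn1 = xn) :
    (cycleCount ((⟨1, Equiv.swap i j⟩ : WP G n) * xn) (c l) : ℤ)
        - (cycleCount xn (c l) : ℤ)
      = (cycleCount (emb (Nat.le_succ n) (⟨1, Equiv.swap i j⟩ : WP G n) * xn1) (c l) : ℤ)
        - (cycleCount xn1 (c l) : ℤ) := by
  classical
  subst h
  have e1 := cycleCount_proj xn1 (c l) (hconj l)
  have e2 := cycleCount_proj
    (emb (Nat.le_succ n) (⟨1, Equiv.swap i j⟩ : WP G n) * xn1) (c l) (hconj l)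
  rw [proj_emb_mul] at e2
  have hr : (emb (Nat.le_succ n) (⟨1, Equiv.swap i j⟩ : WP G n) * xn1).right (Fin.last n)
        = Fin.last n ↔ xn1.right (Fin.last n) = Fin.last n := by
    rw [emb_mul_right, Equiv.Perm.mul_apply]
    exact extend_eq_last_iff _ _
  have hl : (emb (Nat.le_succ n) (⟨1, Equiv.swap i j⟩ : WP G n) * xn1).left (Fin.last n)
      = xn1.left (Fin.last n) := by
    rw [emb_mul_left, extend_inv_last]
  have hδ : (if (emb (Nat.le_succ n) (⟨1, Equiv.swap i j⟩ : WP G n) * xn1).right (Fin.last n)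
          = Fin.last n ∧
        (emb (Nat.le_succ n) (⟨1, Equiv.swap i j⟩ : WP G n) * xn1).left (Fin.last n) ∈ c l
        then 1 else 0)
      = (if xn1.right (Fin.last n) = Fin.last n ∧ xn1.left (Fin.last n) ∈ c l
        then 1 else 0) := by
    rw [hl]
    exact if_congr (and_congr hr Iff.rfl) rfl rfl
  rw [e1, e2, hδ]
  push_cast
  ring

end WreathPaper
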